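/- Let 1 ≤ α ≤ 2 and let p : ℝ → ℝ be an odd function in C¹(ℝ) ∩ C²(ℝ∖{0}) with p'(ξ) ∼ ξ^α and p''(ξ) ∼ ξ^{α−1} for ξ ≥ ξ₀. Let k ≥ 3 and (ξ₁,…,ξ_{k+2}) ∈ ℤ^{k+2} with ∑ ξ_j = 0, |ξ₁| ∼ |ξ₂| ≫ |ξ₃| ≥ |ξ₄| ≥ max_{j≥5}|ξ_j| and |ξ₃+ξ₄| ≫ k·max_{j≥5}|ξ_j|. Then |∑_{j=1}^{k+2} p(ξ_j)| ≳ |ξ₃+ξ₄| |ξ₁|^α for |ξ₁| ≫ (max_{ξ∈[0,ξ₀]}|p'(ξ)|)^{1/α}. -/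

import Mathlib

/-!
Write `ξ₂ = -(ξ₁ + σ)` with `σ = ξ₃ + ξ₄ + ∑_{j ≥ 5} ξ_j`. As `p` is odd,
`∑ p(ξ_j) = (p ξ₁ - p (ξ₁ + σ)) + (p ξ₃ - p (-ξ₄)) + ∑_{j ≥ 5} p ξ_j`.
The tail is small, so `|σ| ∼ |ξ₃ + ξ₄| ≪ |ξ₁|`, and the mean value theorem on `[|ξ₁|/2, ∞)`,
where `p' ≳ |ξ₁|^α`, bounds the first bracket below by a multiple of `|ξ₃ + ξ₄| |ξ₁|^α`.
The remaining terms only see `p'` on `[-|ξ₃|, |ξ₃|]`, where `|p'| ≤ M + C₁ |ξ₃|^α ≪ |ξ₁|^α`.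
-/

open Real

theorem rpow_mul_le_rpow_of_mul_rpow_one_div_le {α a K N : ℝ} (hα : 0 < α) (ha : 0 ≤ a)
    (hK : 0 ≤ K) (h : K * a ^ (1 / α) ≤ N) : K ^ α * a ≤ N ^ α :=
  calc K ^ α * a = (K * a ^ (1 / α)) ^ α := by
        rw [mul_rpow hK (rpow_nonneg ha _), one_div, rpow_inv_rpow ha hα.ne']
    _ ≤ N ^ α := rpow_le_rpow (by positivity) h hα.le

theorem two_mul_le_of_rpow_mul_le {α ξ₀ c₁ M K N : ℝ} (hα : 0 < α) (hξ₀ : 0 ≤ ξ₀) (hK : 0 ≤ K)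
    (hN : 0 ≤ N) (hM : c₁ * ξ₀ ^ α ≤ M) (hKc : 2 ^ α ≤ c₁ * K ^ α) (hKM : K ^ α * M ≤ N ^ α) :
    2 * ξ₀ ≤ N := by
  refine (rpow_le_rpow_iff (by positivity) hN hα).1 ?_
  have hξα := rpow_nonneg hξ₀ α
  have hKα := rpow_nonneg hK α
  calc (2 * ξ₀) ^ α = 2 ^ α * ξ₀ ^ α := mul_rpow zero_le_two hξ₀
    _ ≤ c₁ * K ^ α * ξ₀ ^ α := by gcongr
    _ = K ^ α * (c₁ * ξ₀ ^ α) := by ring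
    _ ≤ K ^ α * M := by gcongr
    _ ≤ N ^ α := hKM

theorem add_mul_rpow_le_of_rpow_mul_le {α c₁ C₁ M C K T N : ℝ} (hα : 0 ≤ α) (hC₁ : 0 ≤ C₁)
    (hC : 0 ≤ C) (hK : 0 < K) (hT : 0 ≤ T) (hN : 0 ≤ N) (hTN : K * T ≤ C * N)
    (hKM : K ^ α * M ≤ N ^ α) (hKc : 8 * 2 ^ α * (1 + C₁ * C ^ α) ≤ c₁ * K ^ α) :
    M + C₁ * T ^ α ≤ c₁ * N ^ α / (8 * 2 ^ α) := by
  have hKT : K ^ α * T ^ α ≤ C ^ α * N ^ α := by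
    rw [← mul_rpow hK.le hT, ← mul_rpow hC hN]
    exact rpow_le_rpow (by positivity) hTN hα
  have hNα := rpow_nonneg hN α
  rw [le_div_iff₀ (by positivity)]
  refine le_of_mul_le_mul_left ?_ (rpow_pos_of_pos hK α)
  calc K ^ α * ((M + C₁ * T ^ α) * (8 * 2 ^ α))
      = 8 * 2 ^ α * (K ^ α * M + C₁ * (K ^ α * T ^ α)) := by ring
    _ ≤ 8 * 2 ^ α * (N ^ α + C₁ * (C ^ α * N ^ α)) := by gcongr
    _ = 8 * 2 ^ α * (1 + C₁ * C ^ α) * N ^ α := by ring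
    _ ≤ c₁ * K ^ α * N ^ α := by gcongr
    _ = K ^ α * (c₁ * N ^ α) := by ring

theorem mul_sum_abs_le_of_forall_mul_card_mul_abs_le {ι : Type*} [Fintype ι] {y : ι → ℝ}
    {K S : ℝ} (hS : 0 ≤ S) (h : ∀ i, K * Fintype.card ι * |y i| ≤ S) :
    K * ∑ i, |y i| ≤ S := by
  rcases (Fintype.card ι).eq_zero_or_pos with hcard | hcard
  · rw [Fintype.card_eq_zero_iff] at hcard
    simpa using hS
  · have hsum := Finset.sum_le_sum fun i (_ : i ∈ Finset.univ) => h i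
    rw [Finset.sum_const, Finset.card_univ, nsmul_eq_mul, ← Finset.mul_sum] at hsum
    refine le_of_mul_le_mul_left ?_ (Nat.cast_pos.2 hcard : (0 : ℝ) < Fintype.card ι)
    linarith

theorem abs_add_add_mem_Icc {C K N x₂ x₃ η : ℝ} (hN : 0 ≤ N) (hK : 2 ≤ K)
    (hKC : 6 * C ≤ K) (h2 : K * |x₂| ≤ C * N) (h32 : |x₃| ≤ |x₂|) (hη : K * |η| ≤ |x₂ + x₃|) :
    |x₂ + x₃ + η| ∈ Set.Icc (|x₂ + x₃| / 2) (N / 2) := by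
  have hη2 : 2 * |η| ≤ |x₂ + x₃| := by nlinarith [abs_nonneg η]
  have hsplit := abs_sub (x₂ + x₃ + η) η
  rw [add_sub_cancel_right] at hsplit
  have h6 : 6 * |x₂| ≤ N := le_of_mul_le_mul_left (by nlinarith) (by linarith : 0 < K)
  constructor
  · linarith
  · linarith [abs_add_le (x₂ + x₃) η, abs_add_le x₂ x₃]

theorem Function.Odd.deriv_even {p : ℝ → ℝ} (hodd : p.Odd) : (deriv p).Even := fun x => by
  have hp : p = fun y => -p (-y) := funext fun y => by rw [hodd, neg_neg]
  conv_rhs => rw [hp]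
  rw [deriv.fun_neg, deriv_comp_neg, neg_neg]

namespace Dispersion

variable {p : ℝ → ℝ} {α ξ₀ c₁ C₁ M : ℝ}

theorem abs_deriv_le (hα : 0 ≤ α) (hc₁ : 0 ≤ c₁) (hC₁ : 0 ≤ C₁) (hM0 : 0 ≤ M)
    (hodd : p.Odd)
    (hp' : ∀ ξ, ξ₀ ≤ ξ → c₁ * ξ ^ α ≤ deriv p ξ ∧ deriv p ξ ≤ C₁ * ξ ^ α)
    (hM : ∀ ξ ∈ Set.Icc 0 ξ₀, |deriv p ξ| ≤ M) {T x : ℝ} (hx : |x| ≤ T) :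
    |deriv p x| ≤ M + C₁ * T ^ α := by
  wlog hx0 : 0 ≤ x generalizing x
  · rw [← hodd.deriv_even]
    exact this (by rwa [abs_neg]) (by linarith)
  rw [abs_of_nonneg hx0] at hx
  have hCT : C₁ * x ^ α ≤ C₁ * T ^ α := by gcongr
  rcases le_or_gt x ξ₀ with hxξ | hξx
  · linarith [hM x ⟨hx0, hxξ⟩, mul_nonneg hC₁ (rpow_nonneg hx0 α)]
  · obtain ⟨hlow, hup⟩ := hp' x hξx.le
    rw [abs_of_nonneg ((mul_nonneg hc₁ (rpow_nonneg hx0 α)).trans hlow)]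
    linarith

theorem abs_sub_le_mul_abs_sub (hα : 0 ≤ α) (hc₁ : 0 ≤ c₁) (hC₁ : 0 ≤ C₁) (hM0 : 0 ≤ M)
    (hodd : p.Odd) (hdiff : Differentiable ℝ p)
    (hp' : ∀ ξ, ξ₀ ≤ ξ → c₁ * ξ ^ α ≤ deriv p ξ ∧ deriv p ξ ≤ C₁ * ξ ^ α)
    (hM : ∀ ξ ∈ Set.Icc 0 ξ₀, |deriv p ξ| ≤ M) {T x y : ℝ} (hx : |x| ≤ T) (hy : |y| ≤ T) :
    |p x - p y| ≤ (M + C₁ * T ^ α) * |x - y| := by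
  simpa only [Real.norm_eq_abs] using
    (convex_Icc (-T) T).norm_image_sub_le_of_norm_deriv_le (fun z _ => hdiff z)
      (fun z hz => abs_deriv_le hα hc₁ hC₁ hM0 hodd hp' hM (abs_le.2 hz))
      (abs_le.1 hy) (abs_le.1 hx)

theorem abs_le_mul_abs (hα : 0 ≤ α) (hc₁ : 0 ≤ c₁) (hC₁ : 0 ≤ C₁) (hM0 : 0 ≤ M)
    (hodd : p.Odd) (hdiff : Differentiable ℝ p)
    (hp' : ∀ ξ, ξ₀ ≤ ξ → c₁ * ξ ^ α ≤ deriv p ξ ∧ deriv p ξ ≤ C₁ * ξ ^ α)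
    (hM : ∀ ξ ∈ Set.Icc 0 ξ₀, |deriv p ξ| ≤ M) {T x : ℝ} (hx : |x| ≤ T) :
    |p x| ≤ (M + C₁ * T ^ α) * |x| := by
  have hp0 : p 0 = 0 := by linarith [neg_zero (G := ℝ) ▸ hodd 0]
  simpa [hp0] using abs_sub_le_mul_abs_sub hα hc₁ hC₁ hM0 hodd hdiff hp' hM hx
    (y := 0) (by simpa using (abs_nonneg x).trans hx)

theorem abs_sum_le {ι : Type*} [Fintype ι] (hα : 0 ≤ α) (hc₁ : 0 ≤ c₁) (hC₁ : 0 ≤ C₁)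
    (hM0 : 0 ≤ M) (hodd : p.Odd) (hdiff : Differentiable ℝ p)
    (hp' : ∀ ξ, ξ₀ ≤ ξ → c₁ * ξ ^ α ≤ deriv p ξ ∧ deriv p ξ ≤ C₁ * ξ ^ α)
    (hM : ∀ ξ ∈ Set.Icc 0 ξ₀, |deriv p ξ| ≤ M) {T : ℝ} {y : ι → ℝ} (hy : ∀ i, |y i| ≤ T) :
    |∑ i, p (y i)| ≤ (M + C₁ * T ^ α) * ∑ i, |y i| := by
  rw [Finset.mul_sum]
  exact (Finset.abs_sum_le_sum_abs _ _).trans (Finset.sum_le_sum fun i _ =>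
    abs_le_mul_abs hα hc₁ hC₁ hM0 hodd hdiff hp' hM (hy i))

theorem abs_add_add_sum_le {ι : Type*} [Fintype ι] (hα : 0 ≤ α) (hc₁ : 0 ≤ c₁)
    (hC₁ : 0 ≤ C₁) (hM0 : 0 ≤ M) (hodd : p.Odd) (hdiff : Differentiable ℝ p)
    (hp' : ∀ ξ, ξ₀ ≤ ξ → c₁ * ξ ^ α ≤ deriv p ξ ∧ deriv p ξ ≤ C₁ * ξ ^ α)
    (hM : ∀ ξ ∈ Set.Icc 0 ξ₀, |deriv p ξ| ≤ M) {x₂ x₃ : ℝ} {y : ι → ℝ} (h32 : |x₃| ≤ |x₂|)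
    (hy : ∀ i, |y i| ≤ |x₃|) (hy_sum : ∑ i, |y i| ≤ |x₂ + x₃|) :
    |p x₂ + p x₃ + ∑ i, p (y i)| ≤ 2 * (M + C₁ * |x₂| ^ α) * |x₂ + x₃| := by
  have hpair := abs_sub_le_mul_abs_sub hα hc₁ hC₁ hM0 hodd hdiff hp' hM le_rfl
    (x := x₂) (y := -x₃) (by rwa [abs_neg])
  rw [hodd, sub_neg_eq_add, sub_neg_eq_add] at hpair
  have htail := abs_sum_le hα hc₁ hC₁ hM0 hodd hdiff hp' hM fun i => (hy i).trans h32
  have hL : 0 ≤ M + C₁ * |x₂| ^ α := by positivity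
  nlinarith [abs_add_le (p x₂ + p x₃) (∑ i, p (y i))]

theorem mul_abs_sub_le_abs_sub_of_le (hα : 0 ≤ α) (hc₁ : 0 ≤ c₁) (hdiff : Differentiable ℝ p)
    (hlow : ∀ ξ, ξ₀ ≤ ξ → c₁ * ξ ^ α ≤ deriv p ξ)
    {m x y : ℝ} (hm : ξ₀ ≤ m) (hm0 : 0 ≤ m) (hx : m ≤ x) (hy : m ≤ y) :
    c₁ * m ^ α * |x - y| ≤ |p x - p y| := by
  wlog hxy : x ≤ y generalizing x y
  · rw [abs_sub_comm, abs_sub_comm (p x)]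
    exact this hy hx (le_of_not_ge hxy)
  have hgrowth : c₁ * m ^ α * (y - x) ≤ p y - p x :=
    (convex_Ici m).mul_sub_le_image_sub_of_le_deriv hdiff.continuous.continuousOn
      hdiff.differentiableOn (fun z hz => by
        have hmz : m ≤ z := interior_subset hz
        exact (mul_le_mul_of_nonneg_left (rpow_le_rpow hm0 hmz hα) hc₁).trans
          (hlow z (hm.trans hmz))) x hx y hy hxy
  have hgap : 0 ≤ c₁ * m ^ α * (y - x) := by
    have := rpow_nonneg hm0 α
    have : 0 ≤ y - x := by linarith
    positivity
  rw [abs_sub_comm, abs_of_nonneg (by linarith), abs_sub_comm, abs_of_nonneg (by linarith)]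
  exact hgrowth

theorem mul_rpow_mul_abs_le_abs_sub_add (hα : 0 ≤ α) (hc₁ : 0 ≤ c₁) (hodd : p.Odd)
    (hdiff : Differentiable ℝ p) (hlow : ∀ ξ, ξ₀ ≤ ξ → c₁ * ξ ^ α ≤ deriv p ξ) {x σ : ℝ}
    (hx : 2 * ξ₀ ≤ |x|) (hσ : |σ| ≤ |x| / 2) :
    c₁ * (|x| / 2) ^ α * |σ| ≤ |p x - p (x + σ)| := by
  wlog hx0 : 0 ≤ x generalizing x σ
  · have h := this (x := -x) (σ := -σ) (by rwa [abs_neg]) (by rwa [abs_neg, abs_neg])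
      (by linarith)
    rwa [abs_neg, abs_neg, ← neg_add, hodd, hodd, neg_sub_neg, abs_sub_comm] at h
  rw [abs_of_nonneg hx0] at hx hσ ⊢
  have h := mul_abs_sub_le_abs_sub_of_le hα hc₁ hdiff hlow (m := x / 2) (x := x) (y := x + σ)
    (by linarith) (by linarith) (by linarith) (by linarith [(abs_le.1 hσ).1])
  rwa [sub_add_cancel_left, abs_neg] at h

theorem abs_add_sum_ge {ι : Type*} [Fintype ι] {C K : ℝ} (hα : 1 ≤ α)
    (hξ₀ : 0 < ξ₀) (hc₁ : 0 < c₁) (hM0 : 0 ≤ M) (hodd : p.Odd)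
    (hdiff : Differentiable ℝ p)
    (hp' : ∀ ξ, ξ₀ ≤ ξ → c₁ * ξ ^ α ≤ deriv p ξ ∧ deriv p ξ ≤ C₁ * ξ ^ α)
    (hM : ∀ ξ ∈ Set.Icc 0 ξ₀, |deriv p ξ| ≤ M) (hC : 1 ≤ C) (hKC : 6 * C ≤ K)
    (hKc : 8 * 2 ^ α * (1 + C₁ * C ^ α) ≤ c₁ * K) {x₀ x₁ x₂ x₃ : ℝ} {y : ι → ℝ}
    (hsum : x₀ + x₁ + x₂ + x₃ + ∑ i, y i = 0) (h10 : |x₁| ≤ C * |x₀|) (h21 : K * |x₂| ≤ |x₁|)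
    (h32 : |x₃| ≤ |x₂|) (hy : ∀ i, |y i| ≤ |x₃|)
    (hyS : ∀ i, K * Fintype.card ι * |y i| ≤ |x₂ + x₃|) (hbig : K * M ^ (1 / α) ≤ |x₀|) :
    c₁ / (4 * 2 ^ α) * |x₂ + x₃| * |x₀| ^ α
      ≤ |p x₀ + p x₁ + p x₂ + p x₃ + ∑ i, p (y i)| := by
  have hα0 : 0 < α := by linarith
  have hK1 : 1 ≤ K := by linarith
  have hC₁ : 0 ≤ C₁ := by
    have := rpow_pos_of_pos hξ₀ α
    nlinarith [hp' ξ₀ le_rfl]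
  have hCα := rpow_nonneg (zero_le_one.trans hC) α
  have hKc' : 8 * 2 ^ α * (1 + C₁ * C ^ α) ≤ c₁ * K ^ α :=
    hKc.trans (by gcongr; exact self_le_rpow_of_one_le hK1 hα)
  set N := |x₀|
  set S := |x₂ + x₃|
  set L := M + C₁ * |x₂| ^ α
  set σ := x₂ + x₃ + ∑ i, y i
  set Q := c₁ * N ^ α / (8 * 2 ^ α)
  have hKM : K ^ α * M ≤ N ^ α :=
    rpow_mul_le_rpow_of_mul_rpow_one_div_le hα0 hM0 (by linarith) hbig
  have hN : 2 * ξ₀ ≤ N := by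
    refine two_mul_le_of_rpow_mul_le hα0 hξ₀.le (by linarith) (abs_nonneg _)
      ((hp' ξ₀ le_rfl).1.trans ((le_abs_self _).trans (hM ξ₀ ⟨hξ₀.le, le_rfl⟩)))
      (le_trans ?_ hKc') hKM
    have := rpow_nonneg zero_le_two α
    nlinarith [mul_nonneg hC₁ hCα]
  have hLQ : L * S ≤ Q * S := mul_le_mul_of_nonneg_right
    (add_mul_rpow_le_of_rpow_mul_le hα0.le hC₁ (by linarith) (by linarith) (abs_nonneg _)
      (abs_nonneg _) (h21.trans h10) hKM hKc') (abs_nonneg _)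
  have hyS' : K * ∑ i, |y i| ≤ S :=
    mul_sum_abs_le_of_forall_mul_card_mul_abs_le (abs_nonneg _) hyS
  obtain ⟨hσS, hσN⟩ := abs_add_add_mem_Icc (η := ∑ i, y i) (abs_nonneg _) (by linarith)
    hKC (h21.trans h10) h32 ((mul_le_mul_of_nonneg_left (Finset.abs_sum_le_sum_abs _ _)
      (by linarith)).trans hyS')
  have hmain : 4 * (Q * S) ≤ |p x₀ - p (x₀ + σ)| :=
    calc 4 * (Q * S) = c₁ * (N ^ α / 2 ^ α) * (S / 2) := by ring
      _ ≤ c₁ * (N / 2) ^ α * |σ| := by rw [div_rpow (abs_nonneg _) zero_le_two]; gcongr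
      _ ≤ |p x₀ - p (x₀ + σ)| := mul_rpow_mul_abs_le_abs_sub_add hα0.le hc₁.le hodd hdiff
        (fun ξ hξ => (hp' ξ hξ).1) hN hσN
  have hy_sum : ∑ i, |y i| ≤ S := by
    have := Finset.sum_nonneg fun i (_ : i ∈ Finset.univ) => abs_nonneg (y i)
    nlinarith
  have herr := abs_add_add_sum_le hα0.le hc₁.le hC₁ hM0 hodd hdiff hp' hM h32 hy hy_sum
  have hx₁ : x₁ = -(x₀ + σ) := by linarith
  rw [hx₁, hodd, ← sub_eq_add_neg, add_assoc _ (p x₂), add_assoc (p x₀ - _)]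
  calc c₁ / (4 * 2 ^ α) * S * N ^ α = 2 * (Q * S) := by ring
    _ ≤ _ := by linarith [abs_sub_abs_le_abs_add (p x₀ - p (x₀ + σ)) (p x₂ + p x₃ + ∑ i, p (y i))]

end Dispersion

theorem resonance_lower_bound_2_general
    (α : ℝ) (hα1 : 1 ≤ α)
    (p : ℝ → ℝ) (ξ₀ : ℝ) (hξ₀ : 0 < ξ₀)
    (hodd : ∀ x : ℝ, p (-x) = - p x)
    (hC1 : ContDiff ℝ 1 p)
    (c₁ C₁ : ℝ) (hc₁ : 0 < c₁)
    (hp' : ∀ ξ : ℝ, ξ₀ ≤ ξ → c₁ * ξ ^ α ≤ deriv p ξ ∧ deriv p ξ ≤ C₁ * ξ ^ α)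
    (M : ℝ) (hM0 : 0 ≤ M) (hM : ∀ ξ ∈ Set.Icc (0 : ℝ) ξ₀, |deriv p ξ| ≤ M)
    (C : ℝ) (hC : 1 ≤ C) :
    ∃ K ≥ (1 : ℝ), ∃ c' > (0 : ℝ), ∀ k : ℕ, 3 ≤ k →
      ∀ ξ : Fin (k + 2) → ℤ,
        (∑ j, ξ j) = 0 →
        |((ξ 0 : ℤ) : ℝ)| ≤ C * |((ξ 1 : ℤ) : ℝ)| →
        |((ξ 1 : ℤ) : ℝ)| ≤ C * |((ξ 0 : ℤ) : ℝ)| →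
        K * |((ξ 2 : ℤ) : ℝ)| ≤ |((ξ 1 : ℤ) : ℝ)| →
        |((ξ 3 : ℤ) : ℝ)| ≤ |((ξ 2 : ℤ) : ℝ)| →
        (∀ j : Fin (k + 2), 4 ≤ (j : ℕ) →
          |((ξ j : ℤ) : ℝ)| ≤ |((ξ 3 : ℤ) : ℝ)|) →
        (∀ j : Fin (k + 2), 4 ≤ (j : ℕ) →
          K * k * |((ξ j : ℤ) : ℝ)| ≤ |((ξ 2 + ξ 3 : ℤ) : ℝ)|) →
        K * M ^ (1 / α) ≤ |((ξ 0 : ℤ) : ℝ)| →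
        c' * |((ξ 2 + ξ 3 : ℤ) : ℝ)| * |((ξ 0 : ℤ) : ℝ)| ^ α
          ≤ |∑ j, p ((ξ j : ℤ) : ℝ)| := by
  set K := max (6 * C) (8 * 2 ^ α * (1 + C₁ * C ^ α) / c₁)
  have hK6 : 6 * C ≤ K := le_max_left _ _
  have hKc : 8 * 2 ^ α * (1 + C₁ * C ^ α) ≤ c₁ * K := (div_le_iff₀' hc₁).1 (le_max_right _ _)
  refine ⟨K, by linarith, c₁ / (4 * 2 ^ α), by positivity, ?_⟩
  intro k hk ξ hsum _ h10 h21 h32 hsm hsm2 hbig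
  obtain ⟨n, rfl⟩ : ∃ n, k = n + 2 := ⟨k - 2, by omega⟩
  have hsplit (f : Fin (n + 2 + 2) → ℝ) :
      ∑ j, f j = f 0 + f 1 + f 2 + f 3 + ∑ i : Fin n, f i.succ.succ.succ.succ := by
    simp only [Fin.sum_univ_succ, add_assoc]
    rfl
  have hval (i : Fin n) : 4 ≤ ((i.succ.succ.succ.succ : Fin (n + 2 + 2)) : ℕ) := by simp
  push_cast at hsm2 ⊢
  rw [hsplit]
  refine Dispersion.abs_add_sum_ge hα1 hξ₀ hc₁ hM0 hodd (hC1.differentiable one_ne_zero) hp' hM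
    hC hK6 hKc (y := fun i => (ξ i.succ.succ.succ.succ : ℝ)) ?_ h10 h21 h32
    (fun i => hsm _ (hval i)) (fun i => ?_) hbig
  · rw [← hsplit (fun j => (ξ j : ℝ))]
    exact_mod_cast hsum
  · refine le_trans ?_ (hsm2 _ (hval i))
    rw [Fintype.card_fin]
    gcongr
    linarith

/-- non-resonance estimate (Lemma 4.7 of the paper) with explicit constants.
If `∑ ξ_j = 0`, `|ξ₁| ∼ |ξ₂| ≫ |ξ₃| ≥ |ξ₄| ≥ max_{j≥5}|ξ_j|`,
`|ξ₃+ξ₄| ≫ k·max_{j≥5}|ξ_j|` and `|ξ₁|` is large enough, then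
`|∑_j p(ξ_j)| ≳ |ξ₃+ξ₄| |ξ₁|^α`. -/
theorem resonance_lower_bound_2
    (α : ℝ) (hα1 : 1 ≤ α) (hα2 : α ≤ 2)
    (p : ℝ → ℝ) (ξ₀ : ℝ) (hξ₀ : 0 < ξ₀)
    (hodd : ∀ x : ℝ, p (-x) = - p x)
    (hC1 : ContDiff ℝ 1 p) (hC2 : ContDiffOn ℝ 2 p {x : ℝ | x ≠ 0})
    (c₁ C₁ : ℝ) (hc₁ : 0 < c₁)
    (hp' : ∀ ξ : ℝ, ξ₀ ≤ ξ → c₁ * ξ ^ α ≤ deriv p ξ ∧ deriv p ξ ≤ C₁ * ξ ^ α)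
    (hp'' : ∀ ξ : ℝ, ξ₀ ≤ ξ →
      c₁ * ξ ^ (α - 1) ≤ |deriv (deriv p) ξ| ∧ |deriv (deriv p) ξ| ≤ C₁ * ξ ^ (α - 1))
    (M : ℝ) (hM0 : 0 ≤ M) (hM : ∀ ξ ∈ Set.Icc (0 : ℝ) ξ₀, |deriv p ξ| ≤ M)
    (C : ℝ) (hC : 1 ≤ C) :
    ∃ K ≥ (1 : ℝ), ∃ c' > (0 : ℝ), ∀ k : ℕ, 3 ≤ k →
      ∀ ξ : Fin (k + 2) → ℤ,
        (∑ j, ξ j) = 0 →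
        |((ξ 0 : ℤ) : ℝ)| ≤ C * |((ξ 1 : ℤ) : ℝ)| →
        |((ξ 1 : ℤ) : ℝ)| ≤ C * |((ξ 0 : ℤ) : ℝ)| →
        K * |((ξ 2 : ℤ) : ℝ)| ≤ |((ξ 1 : ℤ) : ℝ)| →
        |((ξ 3 : ℤ) : ℝ)| ≤ |((ξ 2 : ℤ) : ℝ)| →
        (∀ j : Fin (k + 2), 4 ≤ (j : ℕ) →
          |((ξ j : ℤ) : ℝ)| ≤ |((ξ 3 : ℤ) : ℝ)|) →
        (∀ j : Fin (k + 2), 4 ≤ (j : ℕ) →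
          K * k * |((ξ j : ℤ) : ℝ)| ≤ |((ξ 2 + ξ 3 : ℤ) : ℝ)|) →
        K * M ^ (1 / α) ≤ |((ξ 0 : ℤ) : ℝ)| →
        c' * |((ξ 2 + ξ 3 : ℤ) : ℝ)| * |((ξ 0 : ℤ) : ℝ)| ^ α
          ≤ |∑ j, p ((ξ j : ℤ) : ℝ)| :=
  resonance_lower_bound_2_general α hα1 p ξ₀ hξ₀ hodd hC1 c₁ C₁ hc₁ hp' M hM0 hM C hC
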